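/- arXiv:2504.13514 — 3 statements merged into one kernel-verified Lean document; each statement's English description precedes it below -/
import Mathlib

section
/- If a proper torse-forming vector field V of constant length |V| > 0 on a Riemannian manifold has generating form ω with dual vector field W (the generative), then ω = −|V|^{−2} f μ, where μ is the 1-form dual to V; i.e., W is parallel to V. In particular, if |V| = 1, then V is an anti-torqued vector field. -/
/-- A proper torse-forming vector field `V` of constant length
`|V| = c > 0` has its generative `W` parallel to `V`; indeed
`ω = −|V|⁻² f μ`, where `μ` is the 1-form dual to `V`.  In particular a unit
proper torse-forming vector field is anti-torqued.  Abstract encoding as before. -/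
theorem torse_forming_constant_length_generative_parallel
    {M VF : Type*} [AddCommGroup VF] [Module (M → ℝ) VF]
    (g : VF → VF → M → ℝ)
    (conn : VF → VF → VF)
    (D : VF → (M → ℝ) → (M → ℝ))
    (hgsymm : ∀ X Y, g X Y = g Y X)
    (hgaddL : ∀ X Y Z, g (X + Y) Z = g X Z + g Y Z)
    (hgsmulL : ∀ (h : M → ℝ) (X Y : VF), g (h • X) Y = h * g X Y)
    (hgnondeg : ∀ Z, (∀ X, g Z X = 0) → Z = 0)
    (hcompat : ∀ X Y Z, D X (g Y Z) = g (conn X Y) Z + g Y (conn X Z))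
    (hDconst : ∀ (X : VF) (c : ℝ), D X (fun _ => c) = 0)
    -- `V` is a proper torse-forming vector field:
    (V W : VF) (f : M → ℝ) (ω : VF → M → ℝ)
    (hVnz : ∀ p, 0 < g V V p)                        -- V nowhere zero
    (htorse : ∀ X, conn X V = f • X + ω X • V)       -- torse-forming
    (hf : ∀ p, f p ≠ 0)                              -- f nowhere zero (proper)
    (hω : ∀ p, ∃ X, ω X p ≠ 0)                       -- ω nowhere zero (proper)
    (hW : ∀ X, g W X = ω X)                          -- W is the generative (dual of ω)
    -- |V| is a positive constant c:
    (c : ℝ) (hc : 0 < c) (hlen : ∀ p, g V V p = c ^ 2) :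
    (∀ X, ω X = fun p => -(c ^ 2)⁻¹ * (f p * g X V p)) ∧   -- ω = −|V|⁻² f μ
    (W = (fun p => -(c ^ 2)⁻¹ * f p) • V) ∧                 -- W is parallel to V
    (c = 1 → ∀ X, conn X V = f • X - (f * g X V) • V) := by -- |V|=1 ⇒ anti-torqued

  have hc2 : (c : ℝ) ^ 2 ≠ 0 := pow_ne_zero 2 hc.ne'
  -- key pointwise identity
  have key : ∀ X, ω X = fun p => -(c ^ 2)⁻¹ * (f p * g X V p) := by
    intro X
    have h0 : D X (g V V) = 0 := by
      have : g V V = fun _ => c ^ 2 := funext hlen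
      rw [this, hDconst]
    have h1 := hcompat X V V
    rw [h0, htorse X] at h1
    have h2 : (0 : M → ℝ) = (f * g X V + ω X * g V V) + (f * g V X + ω X * g V V) := by
      have e1 : g (f • X + ω X • V) V = f * g X V + ω X * g V V := by
        rw [hgaddL, hgsmulL, hgsmulL]
      have e2 : g V (f • X + ω X • V) = f * g V X + ω X * g V V := by
        rw [hgsymm V, hgaddL, hgsmulL, hgsmulL, hgsymm X V]
      rw [e1, e2] at h1; exact h1
    funext p
    have h3 := congrFun h2 p
    simp only [Pi.add_apply, Pi.mul_apply, Pi.zero_apply, hlen p] at h3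
    rw [congrFun (hgsymm V X) p] at h3
    field_simp
    linarith [h3]
  refine ⟨key, ?_, ?_⟩
  · -- W parallel to V
    have hz : W - (fun p => -(c ^ 2)⁻¹ * f p) • V = 0 := by
      apply hgnondeg
      intro X
      have : W - (fun p => -(c ^ 2)⁻¹ * f p) • V
          = W + (-(fun p => -(c ^ 2)⁻¹ * f p)) • V := by
        rw [neg_smul, sub_eq_add_neg]
      rw [this, hgaddL, hgsmulL, hW]
      funext p
      have := congrFun (key X) p
      simp only [Pi.add_apply, Pi.mul_apply, Pi.neg_apply, Pi.zero_apply, this]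
      have hx : g V X p = g X V p := congrFun (hgsymm V X) p
      rw [hx]; ring
    linear_combination (norm := abel) hz
  · intro hc1 X
    have hωX : ω X = -(f * g X V) := by
      rw [key X]; funext p
      simp only [Pi.neg_apply, Pi.mul_apply, hc1]
      ring
    rw [htorse X, hωX, neg_smul, sub_eq_add_neg]
end

section
/- In the hyperboloid model, on the open set M̃ = {(x_1,...,x_{n+1}) ∈ H^n : x_{n+1} ≠ 0}, the vector field V = (1/x_{n+1})(∂_{n+1} + x_{n+1} Φ) is anti-torqued with constant conformal scalar 1: ∇_X V = X − ⟨V, X⟩ V for all tangent vector fields X on M̃. -/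
noncomputable section

namespace HyperboloidModel

variable {n : ℕ}

/-- The underlying space `ℝ^(n+1)_1` of Lorentz–Minkowski geometry. -/
abbrev E (n : ℕ) := Fin (n + 1) → ℝ

/-- The Lorentz–Minkowski metric `⟨v,w⟩ = −v_1 w_1 + ∑_{i≥2} v_i w_i`. -/
def mink (v w : E n) : ℝ := (∑ i, v i * w i) - 2 * (v 0 * w 0)

/-- The induced Levi-Civita connection of the hyperboloid `H^n = {P : ⟨P,P⟩ = −1}`:
`∇_X Y = dY(X) − ⟨X,Y⟩ Φ` (Gauss formula), `Φ` the position vector. -/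
def hypbConn (X Y : E n → E n) (p : E n) : E n :=
  fderiv ℝ Y p (X p) - mink (X p) (Y p) • p

/-- The vector field `V = (1/x_(n+1))(∂_(n+1) + x_(n+1) Φ)` on
`M̃ = {x ∈ H^n : x_(n+1) ≠ 0}`. -/
def V : E n → E n := fun q =>
  (q (Fin.last n))⁻¹ • ((Pi.single (Fin.last n) 1 : E n) + q (Fin.last n) • q)

lemma mink_comm (v w : E n) : mink v w = mink w v := by
  simp [mink, mul_comm]

lemma mink_add_right (v w u : E n) : mink v (w + u) = mink v w + mink v u := by
  simp [mink, mul_add, Finset.sum_add_distrib]; ring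

lemma mink_smul_right (c : ℝ) (v w : E n) : mink v (c • w) = c * mink v w := by
  simp only [mink, Pi.smul_apply, smul_eq_mul, mul_sub, Finset.mul_sum]
  congr 1
  · exact Finset.sum_congr rfl fun i _ => by ring
  · ring

lemma mink_single (v : E n) (h0 : v 0 = 0 ∨ (0:Fin (n+1)) ≠ Fin.last n) :
    mink (Pi.single (Fin.last n) 1) v = v (Fin.last n) := by
  have hsum : (∑ i, (Pi.single (Fin.last n) 1 : E n) i * v i) = v (Fin.last n) := by
    rw [Finset.sum_eq_single (Fin.last n)]
    · simp
    · intro b _ hb; simp [Pi.single_apply, hb]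
    · simp
  rcases h0 with h | h
  · simp [mink, hsum, h]
  · simp [mink, hsum, Pi.single_apply, h.symm, Ne.symm h]

/-- The projection onto the last coordinate as a continuous linear map. -/
def projLast (n : ℕ) : E n →L[ℝ] ℝ :=
  ContinuousLinearMap.proj (R := ℝ) (φ := fun _ : Fin (n+1) => ℝ) (Fin.last n)

lemma fderiv_aux (p : E n) (hp' : p (Fin.last n) ≠ 0) (s v : E n) :
    fderiv ℝ (fun q : E n => (q (Fin.last n))⁻¹ • s + q) p v
      = (-(p (Fin.last n) ^ 2)⁻¹ * v (Fin.last n)) • s + v := by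
  have h1 : HasFDerivAt (fun q : E n => q (Fin.last n)) (projLast n) p :=
    (projLast n).hasFDerivAt
  have h2 : HasFDerivAt (fun q : E n => (q (Fin.last n))⁻¹)
      (((1 : ℝ →L[ℝ] ℝ).smulRight (-(p (Fin.last n) ^ 2)⁻¹)).comp (projLast n)) p :=
    (hasDerivAt_inv hp').hasFDerivAt.comp p h1
  have h3 : HasFDerivAt (fun q : E n => (q (Fin.last n))⁻¹ • s + q) _ p :=
    (h2.smul_const s).add (hasFDerivAt_id p)
  rw [h3.fderiv]
  simp [projLast, mul_comm]

/-- On the open set `M̃ = {x ∈ H^n : x_(n+1) ≠ 0}` of the hyperboloid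
model, the vector field `V = (1/x_(n+1))(∂_(n+1) + x_(n+1) Φ)` is anti-torqued with
constant conformal scalar `1`:  `∇_X V = X − ⟨V, X⟩ V` for all tangent vector
fields `X`. -/
theorem anti_torqued_field_on_hyperboloid (X : E n → E n) (p : E n)
    (hp : mink p p = -1)                 -- p lies on H^n
    (hp' : p (Fin.last n) ≠ 0)           -- p ∈ M̃
    (hXtan : mink (X p) p = 0) :         -- X is tangent to H^n at p
    hypbConn X V p = X p - mink (V p) (X p) • V p := by
  set a := p (Fin.last n) with ha
  set s : E n := Pi.single (Fin.last n) 1 with hs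
  -- pointwise simplification of V where the last coordinate is nonzero
  have hVq : ∀ q : E n, q (Fin.last n) ≠ 0 →
      V q = (q (Fin.last n))⁻¹ • s + q := by
    intro q hq
    rw [V, smul_add, smul_smul, inv_mul_cancel₀ hq, one_smul]
  have hVp : V p = a⁻¹ • s + p := hVq p hp'
  -- V agrees with the nice formula near p
  have hmem : {q : E n | q (Fin.last n) ≠ 0} ∈ nhds p :=
    (isOpen_compl_singleton.preimage (continuous_apply (Fin.last n))).mem_nhds hp'
  have hVg : V =ᶠ[nhds p] fun q : E n => (q (Fin.last n))⁻¹ • s + q := by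
    filter_upwards [hmem] with q hq using hVq q hq
  have hfd : fderiv ℝ V p (X p) = (-(a ^ 2)⁻¹ * X p (Fin.last n)) • s + X p := by
    rw [hVg.fderiv_eq, fderiv_aux p hp' s]
  -- key: ⟨s, X p⟩ = (X p)_(n+1)
  have hkey : mink s (X p) = X p (Fin.last n) := by
    apply mink_single
    rcases n with _ | m
    · left
      have hl : (Fin.last 0 : Fin 1) = 0 := rfl
      have h1 := hXtan
      simp [mink, Fin.sum_univ_succ] at h1
      have h2 : X p 0 * p 0 = 0 := by linarith
      rcases mul_eq_zero.mp h2 with h | h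
      · exact h
      · exact absurd h (hl ▸ hp')
    · right
      intro h
      have := congrArg Fin.val h
      simp [Fin.last] at this
  -- the Minkowski product ⟨X p, V p⟩
  have hminkXV : mink (X p) (V p) = a⁻¹ * X p (Fin.last n) := by
    rw [hVp, mink_add_right, mink_smul_right, hXtan, mink_comm (X p) s, hkey]
    ring
  have hminkVX : mink (V p) (X p) = a⁻¹ * X p (Fin.last n) := by
    rw [mink_comm]; exact hminkXV
  -- put everything together
  rw [hypbConn, hfd, hminkXV, hminkVX, hVp]
  have hcoef : (-(a ^ 2)⁻¹ : ℝ) = -(a⁻¹ * a⁻¹) := by rw [sq, mul_inv]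
  rw [hcoef]
  module

end HyperboloidModel
end
end

section
/- Let V be a torqued vector field on hyperbolic space H^n (constant curvature −1) with generating form ω and conformal scalar f. If at each point X, Y, V can be chosen linearly independent, then dω = 0 and the gradient of f satisfies ∇f = V + f W, where W is the generative (dual of ω). -/
noncomputable section

namespace HyperboloidModel

variable {n : ℕ}

/-- Hyperbolic space `H^n`: the upper sheet of the hyperboloid `⟨P,P⟩ = −1`. -/
def H (n : ℕ) : Set (E n) := {p | mink p p = -1 ∧ 0 < p 0}

def minkLin : E n →ₗ[ℝ] E n →ₗ[ℝ] ℝ :=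
  LinearMap.mk₂ ℝ mink
    (fun a b c => by simp [mink, add_mul, Finset.sum_add_distrib]; ring)
    (fun r a b => by
      simp only [mink, Pi.smul_apply, smul_eq_mul, mul_sub, Finset.mul_sum]
      rw [Finset.sum_congr rfl (fun i _ => by ring : ∀ i ∈ Finset.univ, r * a i * b i = r * (a i * b i))]; ring)
    (fun a b c => by simp [mink, mul_add, Finset.sum_add_distrib]; ring)
    (fun r a b => by
      simp only [mink, Pi.smul_apply, smul_eq_mul, mul_sub, Finset.mul_sum]
      rw [Finset.sum_congr rfl (fun i _ => by ring : ∀ i ∈ Finset.univ, a i * (r * b i) = r * (a i * b i))]; ring)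

def minkC : E n →L[ℝ] E n →L[ℝ] ℝ :=
  LinearMap.toContinuousLinearMap
    ((LinearMap.toContinuousLinearMap :
        (E n →ₗ[ℝ] ℝ) ≃ₗ[ℝ] (E n →L[ℝ] ℝ)).toLinearMap.comp minkLin)

lemma minkC_apply (v w : E n) : minkC v w = mink v w := rfl


lemma mink_bilin (a b c d : E n) (r s : ℝ) :
    mink (r • a + b) (s • c + d) =
      r * s * mink a c + r * mink a d + s * mink b c + mink b d := by
  have : ∀ x y : E n, mink x y = minkC x y := fun _ _ => rfl
  simp only [this, map_add, map_smul, ContinuousLinearMap.add_apply,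
    ContinuousLinearMap.smul_apply, ContinuousLinearMap.map_add, ContinuousLinearMap.map_smul,
    smul_eq_mul]
  ring

lemma mink_smul_left (r : ℝ) (a b : E n) : mink (r • a) b = r * mink a b := by
  simp only [mink, Pi.smul_apply, smul_eq_mul, mul_sub, Finset.mul_sum]
  rw [Finset.sum_congr rfl (fun i _ => by ring : ∀ i ∈ Finset.univ, r * a i * b i = r * (a i * b i))]; ring

lemma mink_smul_right_s7 (r : ℝ) (a b : E n) : mink a (r • b) = r * mink a b := by
  rw [mink_comm, mink_smul_left, mink_comm]

lemma mink_add_left (a b c : E n) : mink (a + b) c = mink a c + mink b c := by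
  simp [mink, add_mul, Finset.sum_add_distrib]; ring

lemma mink_add_right_s7 (a b c : E n) : mink a (b + c) = mink a b + mink a c := by
  rw [mink_comm, mink_add_left, mink_comm a b, mink_comm a c]

lemma mink_sub_right (a b c : E n) : mink a (b - c) = mink a b - mink a c := by
  have := mink_add_right_s7 a (b - c) c
  simp at this
  linarith

lemma tangent_fderiv_zero {F : Type*} [NormedAddCommGroup F] [NormedSpace ℝ F]
    (g : E n → F) (p v : E n) (hp : p ∈ H n) (hv : mink v p = 0)
    (hg : DifferentiableAt ℝ g p) (h0 : ∀ q ∈ H n, g q = 0) :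
    fderiv ℝ g p v = 0 := by
  set m := mink v v with hm
  set c : ℝ → ℝ := fun t => (Real.sqrt (1 - m * t ^ 2))⁻¹ with hc
  set γ : ℝ → E n := fun t => c t • (p + t • v) with hγ
  have hc0 : c 0 = 1 := by simp [hc]
  have hγ0 : γ 0 = p := by simp [hγ, hc0]
  -- derivative of c at 0 is 0
  have hu : HasDerivAt (fun t : ℝ => 1 - m * t ^ 2) 0 0 := by
    have h1 : HasDerivAt (fun t : ℝ => m * t ^ 2) (m * (2 * 0 ^ 1)) 0 :=
      (hasDerivAt_pow 2 0).const_mul m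
    have := (hasDerivAt_const (0:ℝ) (1:ℝ)).sub h1
    exact this.congr_deriv (by simp)
  have hsq : HasDerivAt (fun t : ℝ => Real.sqrt (1 - m * t ^ 2)) 0 0 := by
    have h2 := Real.hasDerivAt_sqrt (x := 1) one_ne_zero
    have h3 := HasDerivAt.comp (0:ℝ)
      (show HasDerivAt Real.sqrt (1 / (2 * Real.sqrt 1)) ((fun t : ℝ => 1 - m * t ^ 2) 0) by
        simpa using h2) hu
    exact h3.congr_deriv (by simp)
  have hcd : HasDerivAt c 0 0 := by
    have := hsq.inv (by simp)
    exact this.congr_deriv (by simp)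
  have hline : HasDerivAt (fun t : ℝ => p + t • v) v 0 := by
    exact ((hasDerivAt_const (0:ℝ) p).add ((hasDerivAt_id (0:ℝ)).smul_const v)).congr_deriv (by simp)
  have hγd : HasDerivAt γ v 0 := by
    have := hcd.smul hline
    exact this.congr_deriv (by simp [hc0])
  -- eventually γ t ∈ H
  have hev1 : ∀ᶠ t : ℝ in nhds 0, 0 < 1 - m * t ^ 2 := by
    have hcont : ContinuousAt (fun t : ℝ => 1 - m * t ^ 2) 0 := by fun_prop
    have h4 := hcont.tendsto
    norm_num at h4
    exact h4.eventually (eventually_gt_nhds zero_lt_one)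
  have hev2 : ∀ᶠ t : ℝ in nhds 0, 0 < p 0 + t * v 0 := by
    have hcont : ContinuousAt (fun t : ℝ => p 0 + t * v 0) 0 := by fun_prop
    have h4 := hcont.tendsto
    norm_num at h4
    exact h4.eventually (eventually_gt_nhds hp.2)
  have hevH : ∀ᶠ t : ℝ in nhds 0, γ t ∈ H n := by
    filter_upwards [hev1, hev2] with t h1 h2
    have hsqpos : 0 < Real.sqrt (1 - m * t ^ 2) := Real.sqrt_pos.2 h1
    have hcpos : 0 < c t := inv_pos.2 hsqpos
    constructor
    · -- mink (γ t) (γ t) = -1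
      have hexp : mink (γ t) (γ t) = c t * c t * (mink p p + t * mink p v + t * mink v p + t * t * m) := by
        have h5 : γ t = c t • p + c t • (t • v) := by
          simp [hγ, smul_add]
        rw [h5]
        have := mink_bilin (n := n) p (c t • (t • v)) p (c t • (t • v)) (c t) (c t)
        rw [this]
        simp only [mink_smul_left, mink_smul_right_s7]
        ring
      have hpv : mink p v = 0 := by rw [mink_comm]; exact hv
      have hcc : c t * c t = (1 - m * t ^ 2)⁻¹ := by
        simp only [hc, ← mul_inv, Real.mul_self_sqrt h1.le]
      rw [hexp, hcc, hp.1, hpv, hv]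
      have h9 : (-1 : ℝ) + t * 0 + t * 0 + t * t * m = -(1 - m * t ^ 2) := by ring
      rw [h9, mul_neg, inv_mul_cancel₀ h1.ne']
    · -- 0 < γ t 0
      have : γ t 0 = c t * (p 0 + t * v 0) := by
        simp [hγ, mul_add]
      rw [this]
      exact mul_pos hcpos h2
  -- g ∘ γ is eventually 0
  have hgz : (fun t => g (γ t)) =ᶠ[nhds 0] fun _ => (0 : F) := by
    filter_upwards [hevH] with t ht using h0 (γ t) ht
  have hd1 : HasDerivAt (fun t => g (γ t)) (fderiv ℝ g p v) 0 := by
    have hgf : HasFDerivAt g (fderiv ℝ g p) (γ 0) := hγ0 ▸ hg.hasFDerivAt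
    have := hgf.comp_hasDerivAt 0 hγd
    exact this
  have hd2 : HasDerivAt (fun t => g (γ t)) 0 0 :=
    (hasDerivAt_const (0:ℝ) (0:F)).congr_of_eventuallyEq hgz
  exact hd1.unique hd2


/-- Extension of a vector `u` to a smooth vector field tangent along `H n`. -/
def Xext (u : E n) : E n → E n := fun q => u + mink u q • q

lemma Xext_contDiff (u : E n) : ContDiff ℝ (⊤ : ℕ∞) (Xext u) := by
  have : Xext u = fun q => u + (minkC u q) • q := rfl
  rw [this]
  exact contDiff_const.add (((minkC u).contDiff).smul contDiff_id)

lemma Xext_tangent (u : E n) : ∀ q ∈ H n, mink (Xext u q) q = 0 := by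
  intro q hq
  simp only [Xext, mink_add_left, mink_smul_left, hq.1]
  ring

lemma Xext_apply_of_tangent {u p : E n} (h : mink u p = 0) : Xext u p = u := by
  simp [Xext, h]

lemma Xext_hasFDerivAt (u q : E n) :
    HasFDerivAt (Xext u) ((mink u q) • ContinuousLinearMap.id ℝ (E n)
      + (minkC u).smulRight q) q := by
  have h1 : HasFDerivAt (fun q : E n => minkC u q) (minkC u) q := (minkC u).hasFDerivAt
  have h2 : HasFDerivAt (id : E n → E n) (ContinuousLinearMap.id ℝ (E n)) q :=
    hasFDerivAt_id q
  have h3 := h1.smul h2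
  have h4 := (hasFDerivAt_const u q).add h3
  simp only [zero_add] at h4
  exact h4

lemma starEq (V W : E n → E n) (f : E n → ℝ)
    (htorqued : ∀ X : E n → E n, ContDiff ℝ (⊤ : ℕ∞) X → (∀ p ∈ H n, mink (X p) p = 0) →
        ∀ p ∈ H n, hypbConn X V p = f p • X p + mink (W p) (X p) • V p)
    (p : E n) (hp : p ∈ H n) (v : E n) (hv : mink v p = 0) :
    fderiv ℝ V p v = f p • v + mink (W p) v • V p + mink v (V p) • p := by
  have h := htorqued (Xext v) (Xext_contDiff v) (Xext_tangent v) p hp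
  rw [hypbConn, Xext_apply_of_tangent hv] at h
  exact sub_eq_iff_eq_add.1 h


lemma hEval (V W : E n → E n) (f : E n → ℝ)
    (hV : ContDiff ℝ (⊤ : ℕ∞) V) (hW : ContDiff ℝ (⊤ : ℕ∞) W) (hf : ContDiff ℝ (⊤ : ℕ∞) f)
    (hVtan : ∀ p ∈ H n, mink (V p) p = 0)
    (hWtan : ∀ p ∈ H n, mink (W p) p = 0)
    (htorqued : ∀ X : E n → E n, ContDiff ℝ (⊤ : ℕ∞) X → (∀ p ∈ H n, mink (X p) p = 0) →
        ∀ p ∈ H n, hypbConn X V p = f p • X p + mink (W p) (X p) • V p)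
    (p : E n) (hp : p ∈ H n) (u : E n) (hu : mink u p = 0)
    (w : E n) (hw : mink w p = 0) :
    (fderiv ℝ (fderiv ℝ V) p w) u
      + mink u w • fderiv ℝ V p p
      - fderiv ℝ f p w • u
      - (f p * mink u w) • p
      - mink (fderiv ℝ W p w) u • V p
      - mink (W p) u • fderiv ℝ V p w
      - mink u (fderiv ℝ V p w) • p
      - mink u (V p) • w = 0 := by
  have hWp : mink (W p) p = 0 := hWtan p hp
  have hpV : mink p (V p) = 0 := by rw [mink_comm]; exact hVtan p hp
  -- derivative data
  have hVd : ∀ q, HasFDerivAt V (fderiv ℝ V q) q :=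
    fun q => (hV.differentiable (by simp) q).hasFDerivAt
  have hWd : HasFDerivAt W (fderiv ℝ W p) p := (hW.differentiable (by simp) p).hasFDerivAt
  have hfd : HasFDerivAt f (fderiv ℝ f p) p := (hf.differentiable (by simp) p).hasFDerivAt
  have hD : HasFDerivAt (fderiv ℝ V) (fderiv ℝ (fderiv ℝ V) p) p :=
    (((hV.fderiv_right (m := 1) (by exact WithTop.coe_le_coe.2 le_top)).differentiable (by simp)) p).hasFDerivAt
  have hX := Xext_hasFDerivAt u p
  -- the four pieces
  have hT1 := (hD.clm_apply hX :)
  have hT2 := (hfd.smul hX :)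
  have hc1 : HasFDerivAt (fun q => minkC (W q)) (minkC.comp (fderiv ℝ W p)) p :=
    (minkC.hasFDerivAt.comp p hWd :)
  have hc := (hc1.clm_apply hX :)
  have hT3 := (hc.smul (hVd p) :)
  have hd1 : HasFDerivAt (fun q => minkC (Xext u q))
      (minkC.comp ((mink u p) • ContinuousLinearMap.id ℝ (E n) + (minkC u).smulRight p)) p :=
    (minkC.hasFDerivAt.comp p hX :)
  have hdm := (hd1.clm_apply (hVd p) :)
  have hT4 := (hdm.smul (hasFDerivAt_id p) :)
  have hFd := (((hT1.sub hT2).sub hT3).sub hT4 :)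
  -- F vanishes on H
  have hF0 : ∀ q ∈ H n,
      (fderiv ℝ V q (Xext u q) - f q • Xext u q - minkC (W q) (Xext u q) • V q
        - minkC (Xext u q) (V q) • q) = (0 : E n) := by
    intro q hq
    have hs := starEq V W f htorqued q hq (Xext u q) (Xext_tangent u q hq)
    simp only [minkC_apply, hs]
    abel
  have hzero := tangent_fderiv_zero _ p w hp hw hFd.differentiableAt hF0
  rw [hFd.fderiv] at hzero
  rw [← hzero]
  simp only [ContinuousLinearMap.coe_sub', Pi.sub_apply, ContinuousLinearMap.add_apply,
    ContinuousLinearMap.coe_comp', Function.comp_apply, ContinuousLinearMap.flip_apply,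
    ContinuousLinearMap.smulRight_apply, ContinuousLinearMap.smul_apply,
    ContinuousLinearMap.coe_id', id_eq, ContinuousLinearMap.map_add, ContinuousLinearMap.map_smul,
    minkC_apply, Xext_apply_of_tangent hu, hu, hWp, hpV, zero_smul, smul_zero, add_zero, zero_add,
    mul_zero, zero_mul, mink_smul_left, mink_smul_right_s7, smul_eq_mul]
  module


lemma keyIdentity (V W : E n → E n) (f : E n → ℝ)
    (hV : ContDiff ℝ (⊤ : ℕ∞) V) (hW : ContDiff ℝ (⊤ : ℕ∞) W) (hf : ContDiff ℝ (⊤ : ℕ∞) f)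
    (hVtan : ∀ p ∈ H n, mink (V p) p = 0)
    (hWtan : ∀ p ∈ H n, mink (W p) p = 0)
    (htorqued : ∀ X : E n → E n, ContDiff ℝ (⊤ : ℕ∞) X → (∀ p ∈ H n, mink (X p) p = 0) →
        ∀ p ∈ H n, hypbConn X V p = f p • X p + mink (W p) (X p) • V p)
    (p : E n) (hp : p ∈ H n) (u : E n) (hu : mink u p = 0)
    (w : E n) (hw : mink w p = 0) :
    (fderiv ℝ f p u - f p * mink (W p) u - mink u (V p)) • w
      - (fderiv ℝ f p w - f p * mink (W p) w - mink w (V p)) • u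
      + (mink (fderiv ℝ W p u) w - mink (fderiv ℝ W p w) u) • V p = 0 := by
  have hWp : mink (W p) p = 0 := hWtan p hp
  have e1 := hEval V W f hV hW hf hVtan hWtan htorqued p hp u hu w hw
  have e2 := hEval V W f hV hW hf hVtan hWtan htorqued p hp w hw u hu
  have hAw := starEq V W f htorqued p hp w hw
  have hAu := starEq V W f htorqued p hp u hu
  have hVd : ∀ q, HasFDerivAt V (fderiv ℝ V q) q :=
    fun q => (hV.differentiable (by simp) q).hasFDerivAt
  have hD : HasFDerivAt (fderiv ℝ V) (fderiv ℝ (fderiv ℝ V) p) p :=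
    (((hV.fderiv_right (m := 1) (by exact WithTop.coe_le_coe.2 le_top)).differentiable (by simp)) p).hasFDerivAt
  have hsym : fderiv ℝ (fderiv ℝ V) p w u = fderiv ℝ (fderiv ℝ V) p u w :=
    second_derivative_symmetric hVd hD w u
  rw [mink_comm w u] at e2
  rw [hAw] at e1
  rw [hAu] at e2
  simp only [mink_add_right_s7, mink_smul_right_s7, hu, hw, hWp, mul_zero, add_zero, zero_mul,
    smul_eq_mul] at e1 e2
  rw [mink_comm w u] at e2
  linear_combination (norm := module) e1 - e2 - hsym


/-- At each point of `H n` there is, for any `u`, a tangent vector outside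
`span {u, V p}`. -/
lemma exists_tangent_outside (hn : 3 ≤ n) (p : E n) (hp : p ∈ H n) (u z : E n) :
    ∃ w : E n, mink w p = 0 ∧ w ∉ Submodule.span ℝ {u, z} := by
  classical
  set φ : E n →ₗ[ℝ] ℝ := (minkC p : E n →L[ℝ] ℝ).toLinearMap with hφ
  have hker : ∀ x : E n, x ∈ LinearMap.ker φ ↔ mink x p = 0 := by
    intro x
    rw [LinearMap.mem_ker]
    have hswap : φ x = mink x p := by
      rw [hφ]
      show minkC p x = _
      rw [minkC_apply, mink_comm]
    rw [hswap]
  have hrange : Module.finrank ℝ (LinearMap.range φ) ≤ 1 := by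
    have := Submodule.finrank_le (LinearMap.range φ)
    simpa using this
  have htot : Module.finrank ℝ (E n) = n + 1 := by
    simp [Module.finrank_fintype_fun_eq_card]
  have hkerrank : n ≤ Module.finrank ℝ (LinearMap.ker φ) := by
    have h := LinearMap.finrank_range_add_finrank_ker φ
    omega
  have hspan : Module.finrank ℝ (Submodule.span ℝ ({u, z} : Set (E n))) ≤ 2 := by
    have h := finrank_span_le_card (R := ℝ) (M := E n) ({u, z} : Set (E n))
    have hcard : ({u, z} : Set (E n)).toFinset.card ≤ 2 := by
      calc ({u, z} : Set (E n)).toFinset.card = (insert u {z} : Finset (E n)).card := by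
            congr 1; simp
        _ ≤ 2 := by
            apply le_trans (Finset.card_insert_le _ _); simp
    omega
  have hnotle : ¬ (LinearMap.ker φ ≤ Submodule.span ℝ ({u, z} : Set (E n))) := by
    intro hle
    have := Submodule.finrank_mono hle
    omega
  obtain ⟨w, hw1, hw2⟩ := SetLike.not_le_iff_exists.1 hnotle
  exact ⟨w, (hker w).1 hw1, hw2⟩

lemma Lzero (hn : 3 ≤ n) (V W : E n → E n) (f : E n → ℝ)
    (hV : ContDiff ℝ (⊤ : ℕ∞) V) (hW : ContDiff ℝ (⊤ : ℕ∞) W) (hf : ContDiff ℝ (⊤ : ℕ∞) f)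
    (hVtan : ∀ p ∈ H n, mink (V p) p = 0)
    (hWtan : ∀ p ∈ H n, mink (W p) p = 0)
    (htorqued : ∀ X : E n → E n, ContDiff ℝ (⊤ : ℕ∞) X → (∀ p ∈ H n, mink (X p) p = 0) →
        ∀ p ∈ H n, hypbConn X V p = f p • X p + mink (W p) (X p) • V p)
    (p : E n) (hp : p ∈ H n) (u : E n) (hu : mink u p = 0) :
    fderiv ℝ f p u - f p * mink (W p) u - mink u (V p) = 0 := by
  obtain ⟨w, hw, hwspan⟩ := exists_tangent_outside hn p hp u (V p)
  by_contra hLu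
  apply hwspan
  have key := keyIdentity V W f hV hW hf hVtan hWtan htorqued p hp u hu w hw
  set Lu := fderiv ℝ f p u - f p * mink (W p) u - mink u (V p) with hLudef
  set Lw := fderiv ℝ f p w - f p * mink (W p) w - mink w (V p) with hLwdef
  set S := mink (fderiv ℝ W p u) w - mink (fderiv ℝ W p w) u with hSdef
  have heq : Lu • w = Lw • u - S • V p := by
    have := key
    rw [add_eq_zero_iff_eq_neg] at this
    rw [sub_eq_iff_eq_add] at this
    rw [this]
    module
  have h5 : w = (Lu⁻¹ * Lw) • u + (Lu⁻¹ * (-S)) • V p := by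
    have h6 : Lu⁻¹ • (Lu • w) = Lu⁻¹ • (Lw • u - S • V p) := by rw [heq]
    rw [smul_smul, inv_mul_cancel₀ hLu, one_smul] at h6
    rw [h6]
    module
  exact Submodule.mem_span_pair.2 ⟨Lu⁻¹ * Lw, Lu⁻¹ * (-S), h5.symm⟩

lemma Szero (hn : 3 ≤ n) (V W : E n → E n) (f : E n → ℝ)
    (hV : ContDiff ℝ (⊤ : ℕ∞) V) (hW : ContDiff ℝ (⊤ : ℕ∞) W) (hf : ContDiff ℝ (⊤ : ℕ∞) f)
    (hVtan : ∀ p ∈ H n, mink (V p) p = 0)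
    (hWtan : ∀ p ∈ H n, mink (W p) p = 0)
    (hVnz : ∀ p ∈ H n, 0 < mink (V p) (V p))
    (htorqued : ∀ X : E n → E n, ContDiff ℝ (⊤ : ℕ∞) X → (∀ p ∈ H n, mink (X p) p = 0) →
        ∀ p ∈ H n, hypbConn X V p = f p • X p + mink (W p) (X p) • V p)
    (p : E n) (hp : p ∈ H n) (u : E n) (hu : mink u p = 0)
    (w : E n) (hw : mink w p = 0) :
    mink (fderiv ℝ W p u) w - mink (fderiv ℝ W p w) u = 0 := by
  have key := keyIdentity V W f hV hW hf hVtan hWtan htorqued p hp u hu w hw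
  rw [Lzero hn V W f hV hW hf hVtan hWtan htorqued p hp u hu,
    Lzero hn V W f hV hW hf hVtan hWtan htorqued p hp w hw] at key
  have hVp : V p ≠ 0 := by
    intro h0
    have := hVnz p hp
    rw [h0] at this
    simp [mink] at this
  have : (0 : E n) + (mink (fderiv ℝ W p u) w - mink (fderiv ℝ W p w) u) • V p = 0 := by
    simpa using key
  rw [zero_add, smul_eq_zero] at this
  tauto


theorem torqued_on_hyperbolic_dω_and_gradient' (hn : 3 ≤ n)
    (V W : E n → E n) (f : E n → ℝ)
    (hV : ContDiff ℝ (⊤ : ℕ∞) V) (hW : ContDiff ℝ (⊤ : ℕ∞) W) (hf : ContDiff ℝ (⊤ : ℕ∞) f)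
    (hVtan : ∀ p ∈ H n, mink (V p) p = 0)
    (hWtan : ∀ p ∈ H n, mink (W p) p = 0)
    (hVnz : ∀ p ∈ H n, 0 < mink (V p) (V p))
    (hωV : ∀ p ∈ H n, mink (W p) (V p) = 0)
    (htorqued : ∀ X : E n → E n, ContDiff ℝ (⊤ : ℕ∞) X → (∀ p ∈ H n, mink (X p) p = 0) →
        ∀ p ∈ H n, hypbConn X V p = f p • X p + mink (W p) (X p) • V p) :
    (∀ X Y : E n → E n, ContDiff ℝ (⊤ : ℕ∞) X → ContDiff ℝ (⊤ : ℕ∞) Y →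
        (∀ p ∈ H n, mink (X p) p = 0) → (∀ p ∈ H n, mink (Y p) p = 0) →
        ∀ p ∈ H n,
          fderiv ℝ (fun q => mink (W q) (Y q)) p (X p)
            - fderiv ℝ (fun q => mink (W q) (X q)) p (Y p)
            - mink (W p) (fderiv ℝ Y p (X p) - fderiv ℝ X p (Y p)) = 0) ∧
    (∀ p ∈ H n, ∀ v : E n, mink v p = 0 →
        fderiv ℝ f p v = mink (V p + f p • W p) v) := by
  constructor
  · intro X Y hX hY hXtan hYtan p hp
    have hWd : HasFDerivAt W (fderiv ℝ W p) p := (hW.differentiable (by simp) p).hasFDerivAt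
    have hXd : HasFDerivAt X (fderiv ℝ X p) p := (hX.differentiable (by simp) p).hasFDerivAt
    have hYd : HasFDerivAt Y (fderiv ℝ Y p) p := (hY.differentiable (by simp) p).hasFDerivAt
    have hc1 : HasFDerivAt (fun q => minkC (W q)) (minkC.comp (fderiv ℝ W p)) p :=
      (minkC.hasFDerivAt.comp p hWd :)
    have h1 : HasFDerivAt (fun q => mink (W q) (Y q))
        ((minkC (W p)).comp (fderiv ℝ Y p) + (minkC.comp (fderiv ℝ W p)).flip (Y p)) p :=
      (hc1.clm_apply hYd :)
    have h2 : HasFDerivAt (fun q => mink (W q) (X q))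
        ((minkC (W p)).comp (fderiv ℝ X p) + (minkC.comp (fderiv ℝ W p)).flip (X p)) p :=
      (hc1.clm_apply hXd :)
    rw [h1.fderiv, h2.fderiv]
    simp only [ContinuousLinearMap.add_apply, ContinuousLinearMap.coe_comp', Function.comp_apply,
      ContinuousLinearMap.flip_apply, minkC_apply]
    rw [mink_sub_right]
    have hS := Szero hn V W f hV hW hf hVtan hWtan hVnz htorqued p hp
      (X p) (hXtan p hp) (Y p) (hYtan p hp)
    linarith [hS]
  · intro p hp v hv
    have hL := Lzero hn V W f hV hW hf hVtan hWtan htorqued p hp v hv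
    rw [mink_add_left, mink_smul_left, mink_comm (V p) v]
    linarith [hL]


/-- Let `V` be a torqued vector field on hyperbolic space `H^n`
(constant curvature −1), with generating form `ω = ⟨W, ·⟩` (generative `W`) and
conformal scalar `f`.  If at each point `X, Y, V` can be chosen linearly
independent (here: `n ≥ 3` and `V` nowhere zero), then `dω = 0` and
`∇f = V + f W`. -/
theorem torqued_on_hyperbolic_dω_and_gradient (hn : 3 ≤ n)
    (V W : E n → E n) (f : E n → ℝ)
    (hV : ContDiff ℝ (⊤ : ℕ∞) V) (hW : ContDiff ℝ (⊤ : ℕ∞) W) (hf : ContDiff ℝ (⊤ : ℕ∞) f)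
    (hVtan : ∀ p ∈ H n, mink (V p) p = 0)           -- V is tangent to H^n
    (hWtan : ∀ p ∈ H n, mink (W p) p = 0)           -- W is tangent to H^n
    (hVnz : ∀ p ∈ H n, 0 < mink (V p) (V p))        -- V is nowhere zero
    (hωV : ∀ p ∈ H n, mink (W p) (V p) = 0)         -- ω(V) = 0 (torqued)
    -- ∇_X V = f X + ω(X) V for all smooth tangent vector fields X:
    (htorqued : ∀ X : E n → E n, ContDiff ℝ (⊤ : ℕ∞) X → (∀ p ∈ H n, mink (X p) p = 0) →
        ∀ p ∈ H n, hypbConn X V p = f p • X p + mink (W p) (X p) • V p) :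
    -- dω = 0 : for all smooth tangent vector fields X, Y,
    -- X(ω(Y)) − Y(ω(X)) − ω([X,Y]) = 0 on H^n
    (∀ X Y : E n → E n, ContDiff ℝ (⊤ : ℕ∞) X → ContDiff ℝ (⊤ : ℕ∞) Y →
        (∀ p ∈ H n, mink (X p) p = 0) → (∀ p ∈ H n, mink (Y p) p = 0) →
        ∀ p ∈ H n,
          fderiv ℝ (fun q => mink (W q) (Y q)) p (X p)
            - fderiv ℝ (fun q => mink (W q) (X q)) p (Y p)
            - mink (W p) (fderiv ℝ Y p (X p) - fderiv ℝ X p (Y p)) = 0) ∧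
    -- ∇f = V + f W : for all tangent vectors v at points of H^n,
    -- df(v) = ⟨V + f W, v⟩
    (∀ p ∈ H n, ∀ v : E n, mink v p = 0 →
        fderiv ℝ f p v = mink (V p + f p • W p) v) :=
  torqued_on_hyperbolic_dω_and_gradient' hn V W f hV hW hf hVtan hWtan hVnz hωV htorqued

end HyperboloidModel
end
end
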